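/- Let p ≥ 5 be a prime and H a torsion-free ℤ_p-module which is p-adically separated (⋂_{n≥0} pⁿH = 0). Let F : H → H be an additive map satisfying F(p·x) = p^p·F(x) for all x ∈ H. Suppose x, y ∈ H satisfy F(x) = p³·x, F(y) = p³·y, and x − y ∈ pH. Then x = y. -/
import Mathlib


/-- Rigidity: if `p ≥ 5`, `H` is a torsion-free, `p`-adically separated `ℤ_p`-module, and
`F : H → H` is additive with `F(p·x) = p^p·F(x)`, then any two `p³`-eigenvectors of `F` that are
congruent modulo `p` are equal. -/
theorem padic_rigidity_of_frobenius_eigenvectors (p : ℕ) [Fact p.Prime] (hp5 : 5 ≤ p)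
    {H : Type*} [AddCommGroup H] [Module ℤ_[p] H] [NoZeroSMulDivisors ℤ_[p] H]
    (hsep : ∀ x : H, (∀ n : ℕ, ∃ z : H, x = ((p : ℤ_[p]) ^ n) • z) → x = 0)
    (F : H → H) (hadd : ∀ x y, F (x + y) = F x + F y)
    (hsemi : ∀ x, F ((p : ℤ_[p]) • x) = ((p : ℤ_[p]) ^ p) • F x)
    (x y : H) (hx : F x = ((p : ℤ_[p]) ^ 3) • x) (hy : F y = ((p : ℤ_[p]) ^ 3) • y)
    (hxy : ∃ z : H, x - y = (p : ℤ_[p]) • z) :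
    x = y := by
  have hpne : (p : ℤ_[p]) ≠ 0 := by
    exact_mod_cast Nat.cast_ne_zero.mpr (Fact.out (p := p.Prime)).ne_zero
  have hFsub : ∀ a b, F (a - b) = F a - F b := by
    intro a b
    have h := hadd (a - b) b
    rw [sub_add_cancel] at h
    exact eq_sub_of_add_eq h.symm
  have hiter : ∀ (m : ℕ) (z : H),
      F ((p : ℤ_[p]) ^ m • z) = ((p : ℤ_[p]) ^ (p * m)) • F z := by
    intro m
    induction m with
    | zero => simp
    | succ n ih =>
      intro z
      have h1 : (p : ℤ_[p]) ^ (n + 1) • z = (p : ℤ_[p]) • ((p : ℤ_[p]) ^ n • z) := by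
        rw [smul_smul, ← pow_succ']
      rw [h1, hsemi, ih, smul_smul, ← pow_add]
      congr 1
      ring
  have hFd : F (x - y) = ((p : ℤ_[p]) ^ 3) • (x - y) := by
    rw [hFsub, hx, hy, smul_sub]
  have key : ∀ m : ℕ, ∃ z : H, x - y = (p : ℤ_[p]) ^ (m + 1) • z := by
    intro m
    induction m with
    | zero => simpa [pow_one] using hxy
    | succ n ih =>
      obtain ⟨z, hz⟩ := ih
      have hge : n + 5 ≤ p * (n + 1) := by
        have h5 : 5 * (n + 1) ≤ p * (n + 1) := Nat.mul_le_mul_right _ hp5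
        omega
      have h1 : ((p : ℤ_[p]) ^ 3) • ((p : ℤ_[p]) ^ (n + 1) • z)
          = ((p : ℤ_[p]) ^ (p * (n + 1))) • F z := by
        rw [← hz, ← hFd, hz, hiter]
      obtain ⟨k, hk⟩ : ∃ k, p * (n + 1) = 3 + ((n + 2) + k) := ⟨p * (n + 1) - (n + 5), by omega⟩
      rw [hk] at h1
      have h2 : ((p : ℤ_[p]) ^ (3 + ((n + 2) + k))) • F z
          = ((p : ℤ_[p]) ^ 3) • (((p : ℤ_[p]) ^ ((n + 2) + k)) • F z) := by
        rw [smul_smul, ← pow_add]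
      have h3 : (p : ℤ_[p]) ^ (n + 1) • z
          = ((p : ℤ_[p]) ^ ((n + 2) + k)) • F z :=
        smul_right_injective H (pow_ne_zero 3 hpne) (h1.trans h2)
      refine ⟨((p : ℤ_[p]) ^ k) • F z, ?_⟩
      rw [hz, h3, smul_smul, ← pow_add]
  have hd0 : x - y = 0 := by
    apply hsep
    intro n
    cases n with
    | zero => exact ⟨x - y, by simp⟩
    | succ k => exact key k
  exact sub_eq_zero.mp hd0
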